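/- arXiv:math/0004062 — 6 statements merged into one kernel-verified Lean document; each statement's English description precedes it below -/
import Mathlib

section
/- In the braid group B_{n+1}, the element D^n_1 U^n_1 = (σ_1 σ_2 ⋯ σ_n)(σ_n σ_{n-1} ⋯ σ_1) commutes with every element of the subgroup generated by σ_2, ..., σ_n. -/
/-!
Reading `σ_i * σ_{i+1} * σ_i = σ_{i+1} * σ_i * σ_{i+1}` in the middle of the word and moving the
other letters by far commutativity, `D = σ_1 ⋯ σ_n` satisfies `D σ_i = σ_{i+1} D` and
`U = σ_n ⋯ σ_1` satisfies `U σ_{i+1} = σ_i U`. Hence `D U` commutes with every `σ_j`, `j ≥ 2`,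
and therefore with the subgroup they generate.
-/

theorem List.range'_one_eq_append_cons_cons (k m : ℕ) :
    List.range' 1 (k + 2 + m) = List.range' 1 k ++ (k + 1) :: (k + 2) :: List.range' (k + 3) m := by
  rw [show k + 2 + m = k + (m + 2) by omega, ← List.range'_append_1]
  simp [List.range'_succ, Nat.add_comm 1 k]

section BraidRelation

variable {M : Type*} [Monoid M] {a b : M} {A B : List M}

theorem SemiconjBy.list_prod_append_cons_cons_of_braid (hab : a * b * a = b * a * b)
    (hA : ∀ x ∈ A, Commute x b) (hB : ∀ x ∈ B, Commute x a) :
    SemiconjBy (A ++ a :: b :: B).prod a b := by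
  have hA' := Commute.list_prod_left A b hA
  have hB' := Commute.list_prod_left B a hB
  simp only [SemiconjBy, List.prod_append, List.prod_cons]
  calc A.prod * (a * (b * B.prod)) * a = A.prod * (a * b * (B.prod * a)) := by
        simp only [mul_assoc]
    _ = A.prod * (a * b * a) * B.prod := by rw [hB'.eq]; simp only [mul_assoc]
    _ = A.prod * b * (a * b * B.prod) := by rw [hab]; simp only [mul_assoc]
    _ = b * (A.prod * (a * (b * B.prod))) := by rw [hA'.eq]; simp only [mul_assoc]

theorem SemiconjBy.list_prod_append_cons_cons_rev_of_braid (hab : a * b * a = b * a * b)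
    (hA : ∀ x ∈ A, Commute x b) (hB : ∀ x ∈ B, Commute x a) :
    SemiconjBy (B ++ b :: a :: A).prod b a := by
  have hA' := Commute.list_prod_left A b hA
  have hB' := Commute.list_prod_left B a hB
  simp only [SemiconjBy, List.prod_append, List.prod_cons]
  calc B.prod * (b * (a * A.prod)) * b = B.prod * (b * a * (A.prod * b)) := by
        simp only [mul_assoc]
    _ = B.prod * (b * a * b) * A.prod := by rw [hA'.eq]; simp only [mul_assoc]
    _ = B.prod * a * (b * a * A.prod) := by rw [← hab]; simp only [mul_assoc]
    _ = a * (B.prod * (b * (a * A.prod))) := by rw [hB'.eq]; simp only [mul_assoc]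

end BraidRelation

theorem semiconjBy_prod_range'_mul_prod_reverse {M : Type*} [Monoid M] (σ : ℕ → M) (k m : ℕ)
    (hcomm : ∀ i j, 1 ≤ i → i + 2 ≤ j → j ≤ k + 2 + m → Commute (σ i) (σ j))
    (hbraid : σ (k + 1) * σ (k + 2) * σ (k + 1) = σ (k + 2) * σ (k + 1) * σ (k + 2)) :
    SemiconjBy (((List.range' 1 (k + 2 + m)).map σ).prod *
      (((List.range' 1 (k + 2 + m)).reverse).map σ).prod) (σ (k + 2)) (σ (k + 2)) := by
  have hlow : ∀ x ∈ (List.range' 1 k).map σ, Commute x (σ (k + 2)) := by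
    simp only [List.mem_map, List.mem_range']
    rintro _ ⟨l, ⟨i, hi, rfl⟩, rfl⟩
    exact hcomm _ _ (by omega) (by omega) (by omega)
  have hhigh : ∀ x ∈ (List.range' (k + 3) m).map σ, Commute x (σ (k + 1)) := by
    simp only [List.mem_map, List.mem_range']
    rintro _ ⟨l, ⟨i, hi, rfl⟩, rfl⟩
    exact (hcomm _ _ (by omega) (by omega) (by omega)).symm
  rw [List.range'_one_eq_append_cons_cons]
  refine SemiconjBy.mul_left (y := σ (k + 1)) ?_ ?_
  · simpa using SemiconjBy.list_prod_append_cons_cons_of_braid hbraid hlow hhigh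
  · simpa using SemiconjBy.list_prod_append_cons_cons_rev_of_braid hbraid
      (fun x hx => hlow x (List.mem_reverse.mp hx)) (fun x hx => hhigh x (List.mem_reverse.mp hx))

/-- In the braid group `B_{n+1}` (generators `σ_1, …, σ_n`), the element
`D^n_1 U^n_1 = (σ_1 σ_2 ⋯ σ_n)(σ_n σ_{n-1} ⋯ σ_1)` commutes with every element of the subgroup
generated by `σ_2, …, σ_n`. -/
theorem stmt2 {G : Type*} [Group G] (n : ℕ) (σ : ℕ → G)
    (hcomm : ∀ i j, 1 ≤ i → i + 2 ≤ j → j ≤ n → σ i * σ j = σ j * σ i)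
    (hbraid : ∀ i, 1 ≤ i → i + 1 ≤ n →
      σ i * σ (i + 1) * σ i = σ (i + 1) * σ i * σ (i + 1))
    (D U : G) (hD : D = ((List.range' 1 n).map σ).prod)
    (hU : U = (((List.range' 1 n).reverse).map σ).prod) :
    ∀ x ∈ Subgroup.closure {g : G | ∃ j, 2 ≤ j ∧ j ≤ n ∧ g = σ j},
      x * (D * U) = (D * U) * x := by
  suffices D * U ∈ Subgroup.centralizer (Subgroup.closure {g : G | ∃ j, 2 ≤ j ∧ j ≤ n ∧ g = σ j})
    from Subgroup.mem_centralizer_iff.mp this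
  rw [Subgroup.centralizer_closure, Subgroup.mem_centralizer_iff]
  rintro _ ⟨j, hj, hjn, rfl⟩
  obtain ⟨k, rfl⟩ : ∃ k, j = k + 2 := ⟨j - 2, by omega⟩
  obtain ⟨m, rfl⟩ : ∃ m, n = k + 2 + m := ⟨n - (k + 2), by omega⟩
  subst hD hU
  exact (semiconjBy_prod_range'_mul_prod_reverse σ k m hcomm
    (hbraid (k + 1) (by omega) (by omega))).eq.symm
end

section
/- In the braid group B_{n+1}, for 1 ≤ j < n one has the identity U^j_1 · D^n_2 · σ_n = D^n_1 · σ_n · U^{j-1}_1, where U^j_i = σ_j σ_{j-1} ⋯ σ_i, D^j_i = σ_i σ_{i+1} ⋯ σ_j, and U^0_1 is interpreted as the identity element. -/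
/-!
Write `D = σ_1 σ_2 ⋯ σ_n σ_n`. For `1 ≤ i ≤ n - 2`, the braid relation at `i` and the far
commutations give `D σ_i = σ_{i+1} D`. Absorbing the last letter `σ_1` of `U^j_1` into `D^n_2`
turns the left side into `σ_j ⋯ σ_2 · D`, and pushing `D` leftwards through this word lowers
every index by one, giving `D · σ_{j-1} ⋯ σ_1`.
-/

theorem SemiconjBy.list_prod_map {M ι : Type*} [Monoid M] {x : M} {f g : ι → M} :
    ∀ {l : List ι}, (∀ i ∈ l, SemiconjBy x (f i) (g i)) →
      SemiconjBy x (l.map f).prod (l.map g).prod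
  | [], _ => by simp
  | i :: l, h => by
    simpa using (h i (by simp)).mul_right (list_prod_map fun k hk => h k (by simp [hk]))

theorem List.range'_eq_append_pair_append (s a b : ℕ) :
    List.range' s (a + 2 + b)
      = List.range' s a ++ [s + a, s + a + 1] ++ List.range' (s + a + 2) b := by
  rw [← List.range'_append, ← List.range'_append]
  simp [List.range'_succ, Nat.add_assoc]

theorem Commute.list_prod_map_range' {M : Type*} [Monoid M] {x : M} {σ : ℕ → M} {s m : ℕ}
    (h : ∀ k, s ≤ k → k < s + m → Commute x (σ k)) :
    Commute x ((List.range' s m).map σ).prod :=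
  Commute.list_prod_right _ _ fun _ hy => by
    obtain ⟨k, hk, rfl⟩ := List.mem_map.1 hy
    exact h k (List.mem_range'_1.1 hk).1 (List.mem_range'_1.1 hk).2

theorem semiconjBy_prod_range'_mul {M : Type*} [Monoid M] {n : ℕ} {σ : ℕ → M}
    (hcomm : ∀ i j, 1 ≤ i → i + 2 ≤ j → j ≤ n → σ i * σ j = σ j * σ i)
    (hbraid : ∀ i, 1 ≤ i → i + 1 ≤ n →
      σ i * σ (i + 1) * σ i = σ (i + 1) * σ i * σ (i + 1))
    {i : ℕ} (hi : 1 ≤ i) (hin : i + 2 ≤ n) :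
    SemiconjBy (((List.range' 1 n).map σ).prod * σ n) (σ i) (σ (i + 1)) := by
  set A := ((List.range' 1 (i - 1)).map σ).prod
  set B := ((List.range' (i + 2) (n - i - 1)).map σ).prod
  have hsplit : ((List.range' 1 n).map σ).prod * σ n = A * (σ i * σ (i + 1)) * (B * σ n) := by
    have := List.range'_eq_append_pair_append 1 (i - 1) (n - i - 1)
    rw [show i - 1 + 2 + (n - i - 1) = n by omega, show 1 + (i - 1) = i by omega] at this
    simp [this, A, B, mul_assoc]
  have hA : Commute (σ (i + 1)) A :=
    Commute.list_prod_map_range' fun k hk hki => (hcomm k (i + 1) hk (by omega) (by omega)).symm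
  have hB : Commute (σ i) (B * σ n) :=
    (Commute.list_prod_map_range' fun k hk hkn => hcomm i k hi hk (by omega)).mul_right
      (hcomm i n hi hin le_rfl)
  have hP : SemiconjBy (σ i * σ (i + 1)) (σ i) (σ (i + 1)) := by
    unfold SemiconjBy; rw [hbraid i hi (by omega), mul_assoc]
  rw [hsplit]
  exact (SemiconjBy.mul_left hA.symm hP).mul_left hB.symm

/-- In the braid group `B_{n+1}` (generators `σ_1, …, σ_n`), for `1 ≤ j < n` one has
`U^j_1 · D^n_2 · σ_n = D^n_1 · σ_n · U^{j-1}_1`, where `U^j_i = σ_j σ_{j-1} ⋯ σ_i`,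
`D^j_i = σ_i σ_{i+1} ⋯ σ_j`, and `U^0_1` is the identity element. -/
theorem stmt3 {G : Type*} [Group G] (n : ℕ) (σ : ℕ → G)
    (hcomm : ∀ i j, 1 ≤ i → i + 2 ≤ j → j ≤ n → σ i * σ j = σ j * σ i)
    (hbraid : ∀ i, 1 ≤ i → i + 1 ≤ n →
      σ i * σ (i + 1) * σ i = σ (i + 1) * σ i * σ (i + 1))
    (j : ℕ) (hj1 : 1 ≤ j) (hjn : j < n) :
    (((List.range' 1 j).reverse).map σ).prod * ((List.range' 2 (n - 1)).map σ).prod * σ n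
      = ((List.range' 1 n).map σ).prod * σ n * (((List.range' 1 (j - 1)).reverse).map σ).prod := by
  obtain ⟨k, rfl⟩ : ∃ k, j = k + 1 := ⟨j - 1, by omega⟩
  have hD : List.range' 1 n = 1 :: List.range' 2 (n - 1) := by
    have := List.range'_succ (s := 1) (n := n - 1) (step := 1)
    rwa [Nat.sub_add_cancel (by omega)] at this
  have hU : (List.range' 1 (k + 1)).reverse.map σ
      = (List.range' 1 k).reverse.map (fun i => σ (i + 1)) ++ [σ 1] := by
    rw [List.range'_succ, List.reverse_cons, List.map_append, ← List.map_add_range',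
      ← List.map_reverse, List.map_map]
    simp [Function.comp_def, add_comm]
  have hconj : SemiconjBy (((List.range' 1 n).map σ).prod * σ n)
      ((List.range' 1 k).reverse.map σ).prod
      ((List.range' 1 k).reverse.map fun i => σ (i + 1)).prod :=
    SemiconjBy.list_prod_map fun i hi => by
      rw [List.mem_reverse, List.mem_range'_1] at hi
      exact semiconjBy_prod_range'_mul hcomm hbraid hi.1 (by omega)
  rw [hU, Nat.add_sub_cancel, hconj.eq, List.prod_append, hD]
  simp [mul_assoc]
end

section
/- Let X be a crossed set and for n ≥ 0 let C^n(X) be the abelian group of functions X^n → k^× (pointwise multiplication), with differential δ^n(f)(x_0,…,x_n) = ∏_{i=0}^{n-1} f(x_0,…,x_{i-1},x_{i+1},…,x_n)^{(-1)^i} · f(x_0,…,x_{i-1}, x_i ▷ x_{i+1}, …, x_i ▷ x_n)^{(-1)^{i+1}}, and δ^0 = 0. Then δ^{n+1} ∘ δ^n is trivial, i.e., (C^•(X), δ) is a cochain complex. -/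
section Aux

variable {X : Type*} (op : X → X → X)

/-- Face maps: `crossedFace op false i` deletes coordinate `i`;
`crossedFace op true i` deletes coordinate `i` and acts by `x i` on later coordinates. -/
def crossedFace {n : ℕ} (ε : Bool) (i : Fin n) (x : Fin (n + 1) → X) : Fin n → X :=
  fun j => if (j : ℕ) < (i : ℕ) then x (Fin.castSucc j)
    else cond ε (op (x (Fin.castSucc i)) (x j.succ)) (x j.succ)

lemma crossedFace_comm (h4 : ∀ a b c, op a (op b c) = op (op a b) (op a c))
    {n : ℕ} (x : Fin (n + 2) → X) (ε η : Bool) (i : Fin (n + 1)) (j : Fin n)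
    (h : (j : ℕ) < (i : ℕ)) :
    crossedFace op η j (crossedFace op ε i x)
      = crossedFace op ε ⟨(i : ℕ) - 1, by have := j.isLt; omega⟩
          (crossedFace op η ⟨(j : ℕ), by have := j.isLt; omega⟩ x) := by
  obtain ⟨i, hi⟩ := i
  simp only [] at h
  obtain ⟨iv, rfl⟩ : ∃ t, i = t + 1 := ⟨i - 1, by omega⟩
  funext m
  obtain ⟨m, hm⟩ := m
  obtain ⟨j, hj⟩ := j
  have h' : j < iv + 1 := h
  cases ε <;> cases η <;>
    simp only [crossedFace, cond, Fin.castSucc_mk, Fin.succ_mk, Nat.add_sub_cancel] <;>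
    split_ifs <;>
    first
      | rfl
      | omega
      | (rw [h4])

end Aux

/-- The multiplicative differential `δ^n : C^n(X) → C^{n+1}(X)` of a crossed set `(X, ▷)`, where
`C^n(X)` is the group of functions `X^n → kˣ`:
`δ^n(f)(x_0,…,x_n) = ∏_{i=0}^{n-1} f(x_0,…,x̂_i,…,x_n)^{(-1)^i} ·
f(x_0,…,x_{i-1}, x_i ▷ x_{i+1},…, x_i ▷ x_n)^{(-1)^{i+1}}`.
(For `n = 0` the product is empty, so `δ^0` is trivial.) -/
noncomputable def crossedDelta {X k : Type*} [Field k] (op : X → X → X) (n : ℕ)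
    (f : (Fin n → X) → kˣ) : (Fin (n + 1) → X) → kˣ :=
  fun x => ∏ i : Fin n,
    (f (fun j => x ((Fin.castSucc i).succAbove j))) ^ ((-1 : ℤ) ^ (i : ℕ)) *
      (f (fun j => if (j : ℕ) < (i : ℕ) then x (Fin.castSucc j)
          else op (x (Fin.castSucc i)) (x j.succ))) ^ ((-1 : ℤ) ^ ((i : ℕ) + 1))

section Aux2

variable {X k : Type*} [Field k]

lemma crossedDelta_eq (op : X → X → X) (n : ℕ) (f : (Fin n → X) → kˣ)
    (x : Fin (n + 1) → X) :
    crossedDelta (k := k) op n f x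
      = ∏ i : Fin n, ∏ ε : Bool,
          f (crossedFace op ε i x) ^ ((-1 : ℤ) ^ ((i : ℕ) + cond ε 1 0)) := by
  unfold crossedDelta
  refine Finset.prod_congr rfl fun i _ => ?_
  have hfalse : (fun j => x ((Fin.castSucc i).succAbove j)) = crossedFace op false i x := by
    funext j
    simp only [crossedFace, cond]
    rw [Fin.succAbove, apply_ite x]
    simp only [Fin.castSucc_lt_castSucc_iff, Fin.lt_def, Fin.coe_castSucc]
  have htrue : (fun (j : Fin n) => if (j : ℕ) < (i : ℕ) then x (Fin.castSucc j)
      else op (x (Fin.castSucc i)) (x j.succ)) = crossedFace op true i x := rfl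
  rw [hfalse, htrue, Fintype.prod_bool]
  simp only [Bool.cond_true, Bool.cond_false, Nat.add_zero]
  exact mul_comm _ _

lemma zpow_negOnePow_cancel (b : kˣ) (p q : ℕ) (h : (p + q) % 2 = 1) :
    b ^ ((-1 : ℤ) ^ p) * b ^ ((-1 : ℤ) ^ q) = 1 := by
  rw [← zpow_add]
  have : (-1 : ℤ) ^ p + (-1 : ℤ) ^ q = 0 := by
    rcases Nat.even_or_odd p with hp | hp
    · have hq : Odd q := by
        rcases Nat.even_or_odd q with hq | hq
        · exfalso; rcases hp with ⟨a, ha⟩; rcases hq with ⟨b, hb⟩; omega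
        · exact hq
      rw [Even.neg_one_pow hp, Odd.neg_one_pow hq]; ring
    · have hq : Even q := by
        rcases Nat.even_or_odd q with hq | hq
        · exact hq
        · exfalso; rcases hp with ⟨a, ha⟩; rcases hq with ⟨b, hb⟩; omega
      rw [Odd.neg_one_pow hp, Even.neg_one_pow hq]; ring
  rw [this, zpow_zero]

end Aux2

/-- The involution pairing up terms of `δ∘δ`. -/
def quadInv {n : ℕ} :
    Fin (n + 1) × Bool × Fin n × Bool → Fin (n + 1) × Bool × Fin n × Bool
  | (i, ε, j, η) =>
    if _h : (j : ℕ) < (i : ℕ) then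
      (⟨(j : ℕ), by have := j.isLt; omega⟩, η,
        ⟨(i : ℕ) - 1, by have := j.isLt; have := i.isLt; omega⟩, ε)
    else
      (⟨(j : ℕ) + 1, by have := j.isLt; omega⟩, η,
        ⟨(i : ℕ), by have := j.isLt; omega⟩, ε)

/-- For a finite crossed set `(X, ▷)`, the differentials `δ` make
`C^•(X) = {f : X^n → kˣ}` into a cochain complex: `δ^{n+1} ∘ δ^n` is trivial. -/
theorem stmt10 {X k : Type*} [Fintype X] [Field k] (op : X → X → X)
    (h1 : ∀ i, Function.Bijective (fun j => op i j))
    (h2 : ∀ i, op i i = i)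
    (h3 : ∀ i j, op i j = j → op j i = i)
    (h4 : ∀ i j k, op i (op j k) = op (op i j) (op i k))
    (n : ℕ) (f : (Fin n → X) → kˣ) :
    crossedDelta (k := k) op (n + 1) (crossedDelta op n f) = fun _ => 1 := by
  funext x
  simp only [crossedDelta_eq]
  simp only [← Finset.prod_zpow, ← zpow_mul, ← pow_add]
  show (∏ i : Fin (n+1), ∏ ε : Bool, ∏ j : Fin n, ∏ η : Bool,
      (fun (i : Fin (n+1)) (ε : Bool) (j : Fin n) (η : Bool) =>
        f (crossedFace op η j (crossedFace op ε i x))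
          ^ ((-1 : ℤ) ^ (((j : ℕ) + cond η 1 0) + ((i : ℕ) + cond ε 1 0)))) i ε j η) = 1
  set F := fun (i : Fin (n+1)) (ε : Bool) (j : Fin n) (η : Bool) =>
        f (crossedFace op η j (crossedFace op ε i x))
          ^ ((-1 : ℤ) ^ (((j : ℕ) + cond η 1 0) + ((i : ℕ) + cond ε 1 0))) with hF
  have hfuse : (∏ i : Fin (n+1), ∏ ε : Bool, ∏ j : Fin n, ∏ η : Bool, F i ε j η)
      = ∏ t : Fin (n + 1) × Bool × Fin n × Bool, F t.1 t.2.1 t.2.2.1 t.2.2.2 := by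
    rw [Fintype.prod_prod_type]
    refine Finset.prod_congr rfl fun a _ => ?_
    rw [Fintype.prod_prod_type]
    refine Finset.prod_congr rfl fun b _ => ?_
    rw [Fintype.prod_prod_type]
  rw [hfuse]
  refine Finset.prod_involution (fun t _ => quadInv t) ?_ ?_ (fun _ _ => Finset.mem_univ _) ?_
  · rintro ⟨i, ε, j, η⟩ -
    by_cases h : (j : ℕ) < (i : ℕ)
    · simp only [quadInv, dif_pos h, hF]
      rw [crossedFace_comm op h4 x ε η i j h]
      refine zpow_negOnePow_cancel _ _ _ ?_
      omega
    · simp only [quadInv, dif_neg h, hF]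
      have hc := crossedFace_comm op h4 x η ε
        (⟨(j : ℕ) + 1, by have := j.isLt; omega⟩ : Fin (n+1))
        (⟨(i : ℕ), by have := j.isLt; omega⟩ : Fin n)
        (show ((⟨(i : ℕ), _⟩ : Fin n) : ℕ) < ((⟨(j : ℕ) + 1, _⟩ : Fin (n+1)) : ℕ) from by
          simp only [Fin.val_mk]; omega)
      simp only [Nat.add_sub_cancel, Fin.eta] at hc
      rw [hc]
      refine zpow_negOnePow_cancel _ _ _ ?_
      omega
  · rintro ⟨i, ε, j, η⟩ - -
    by_cases h : (j : ℕ) < (i : ℕ)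
    · simp only [quadInv, dif_pos h]
      intro heq
      have := congrArg (fun t => (t.1 : ℕ)) heq
      simp at this
      omega
    · simp only [quadInv, dif_neg h]
      intro heq
      have := congrArg (fun t => (t.1 : ℕ)) heq
      simp at this
      omega
  · rintro ⟨i, ε, j, η⟩ -
    by_cases h : (j : ℕ) < (i : ℕ)
    · simp only [quadInv, dif_pos h]
      split_ifs with hco
      · exact absurd (hco : (i : ℕ) - 1 < (j : ℕ)) (by omega)
      · exact Prod.ext (Fin.ext (by omega : (i : ℕ) - 1 + 1 = (i : ℕ)))
          (Prod.ext rfl (Prod.ext (Fin.ext (rfl : (j : ℕ) = (j : ℕ))) rfl))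
    · simp only [quadInv, dif_neg h]
      split_ifs with hco
      · exact Prod.ext (Fin.ext (rfl : (i : ℕ) = (i : ℕ)))
          (Prod.ext rfl (Prod.ext (Fin.ext (by omega : (j : ℕ) + 1 - 1 = (j : ℕ))) rfl))
      · exact absurd (by omega : (i : ℕ) < (j : ℕ) + 1) hco
end

section
/- Let q be a primitive root of unity of order N(q) in a field k of characteristic 0, where N(q) is finite, and let n, m be natural numbers with m ≤ n. Then the Gaussian binomial coefficient binom(n, m)_q := [n]_q! / ([m]_q! [n−m]_q!) — defined by evaluating the polynomial Gaussian binomial at q — vanishes if and only if, writing n = a·N(q) + b and m = c·N(q) + d with 0 ≤ b, d < N(q), one has d > b. In particular binom(N(q), m)_q = 0 for 0 < m < N(q). -/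
/-- The `q`-integer polynomial `[n]_Q = 1 + Q + ⋯ + Q^{n-1} ∈ ℤ[Q]`. -/
noncomputable def qIntP (n : ℕ) : Polynomial ℤ := ∑ i ∈ Finset.range n, Polynomial.X ^ i

/-- The `q`-factorial polynomial `[n]_Q! = ∏_{i=1}^n [i]_Q ∈ ℤ[Q]`. -/
noncomputable def qFactP (n : ℕ) : Polynomial ℤ := ∏ i ∈ Finset.range n, qIntP (i + 1)

open Polynomial

lemma qIntP_map {k : Type*} [Field k] (j : ℕ) :
    (qIntP j).map (Int.castRingHom k) = ∑ i ∈ Finset.range j, X ^ i := by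
  simp [qIntP, Polynomial.map_sum]

lemma geomP_ne_zero {k : Type*} [Field k] [CharZero k] (j : ℕ) (hj : 0 < j) :
    (∑ i ∈ Finset.range j, (X : Polynomial k) ^ i) ≠ 0 := by
  intro h
  have := congr_arg (Polynomial.eval (1 : k)) h
  simp at this
  exact_mod_cast Nat.cast_ne_zero.mpr hj.ne' (by exact_mod_cast this : (j : k) = 0)

lemma mult_qIntP {k : Type*} [Field k] [CharZero k] (q : k) (hq1 : q ≠ 1)
    (hq : orderOf q ≠ 0) (j : ℕ) (hj : 0 < j) :
    ((qIntP j).map (Int.castRingHom k)).rootMultiplicity q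
      = if orderOf q ∣ j then 1 else 0 := by
  have hq0 : q ≠ 0 := by
    intro h0
    have h1 : q ^ orderOf q = 1 := pow_orderOf_eq_one q
    rw [h0] at h1 hq
    rw [zero_pow hq] at h1
    exact zero_ne_one h1
  rw [qIntP_map]
  by_cases hd : orderOf q ∣ j
  · rw [if_pos hd]
    have hqj : q ^ j = 1 := orderOf_dvd_iff_pow_eq_one.mp hd
    have hroot : IsRoot (∑ i ∈ Finset.range j, (X : Polynomial k) ^ i) q := by
      have h : (∑ i ∈ Finset.range j, q ^ i) * (q - 1) = q ^ j - 1 := geom_sum_mul q j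
      rw [hqj, sub_self] at h
      have hne : q - 1 ≠ 0 := sub_ne_zero.mpr hq1
      have := (mul_eq_zero.mp h).resolve_right hne
      simpa [IsRoot]
    have hne : (∑ i ∈ Finset.range j, (X : Polynomial k) ^ i) ≠ 0 := geomP_ne_zero j hj
    have h1 : 0 < (∑ i ∈ Finset.range j, (X : Polynomial k) ^ i).rootMultiplicity q :=
      (rootMultiplicity_pos hne).mpr hroot
    have hXj : ((X : Polynomial k) ^ j - 1) ≠ 0 := by
      intro h
      have := congr_arg (Polynomial.eval (0 : k)) h
      simp [zero_pow hj.ne'] at this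
    have hle : ¬ 1 < ((X : Polynomial k) ^ j - 1).rootMultiplicity q := by
      rw [one_lt_rootMultiplicity_iff_isRoot hXj]
      rintro ⟨-, hder⟩
      simp only [derivative_sub, derivative_one, derivative_X_pow, sub_zero, IsRoot,
        eval_mul, eval_pow, eval_X, eval_natCast] at hder
      rcases mul_eq_zero.mp hder with h | h
      · rw [eval_C] at h
        exact Nat.cast_ne_zero.mpr hj.ne' h
      · exact pow_ne_zero _ hq0 h
    have hX1ne : ((X : Polynomial k) - 1) ≠ 0 := by
      have := X_sub_C_ne_zero (1 : k)
      simpa using this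
    have hmul : ((∑ i ∈ Finset.range j, (X : Polynomial k) ^ i) * (X - 1)).rootMultiplicity q
        = (∑ i ∈ Finset.range j, (X : Polynomial k) ^ i).rootMultiplicity q
          + ((X : Polynomial k) - 1).rootMultiplicity q :=
      rootMultiplicity_mul (mul_ne_zero hne hX1ne)
    have hgm : (∑ i ∈ Finset.range j, (X : Polynomial k) ^ i) * (X - 1) = (X : Polynomial k) ^ j - 1 :=
      geom_sum_mul (X : Polynomial k) j
    have hX1 : ((X : Polynomial k) - 1).rootMultiplicity q = 0 :=
      rootMultiplicity_eq_zero (by simp [IsRoot, sub_eq_zero, hq1])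
    rw [hgm] at hmul
    omega
  · rw [if_neg hd]
    apply rootMultiplicity_eq_zero
    simp only [IsRoot, eval_finset_sum, eval_pow, eval_X]
    rw [geom_sum_eq hq1]
    intro h
    have hne : q ^ j - 1 ≠ 0 :=
      sub_ne_zero.mpr fun h1 => hd (orderOf_dvd_iff_pow_eq_one.mpr h1)
    exact hne ((div_eq_zero_iff.mp h).resolve_right (sub_ne_zero.mpr hq1))

lemma qFactP_map {k : Type*} [Field k] (n : ℕ) :
    (qFactP n).map (Int.castRingHom k)
      = ∏ i ∈ Finset.range n, (qIntP (i + 1)).map (Int.castRingHom k) := by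
  simp [qFactP, Polynomial.map_prod]

lemma qFactP_map_ne_zero {k : Type*} [Field k] [CharZero k] (n : ℕ) :
    (qFactP n).map (Int.castRingHom k) ≠ 0 := by
  rw [qFactP_map]
  apply Finset.prod_ne_zero_iff.mpr
  intro i _
  rw [qIntP_map]
  exact geomP_ne_zero _ (Nat.succ_pos i)

lemma mult_qFactP {k : Type*} [Field k] [CharZero k] (q : k) (hq1 : q ≠ 1)
    (hq : orderOf q ≠ 0) (n : ℕ) :
    ((qFactP n).map (Int.castRingHom k)).rootMultiplicity q = n / orderOf q := by
  induction n with
  | zero =>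
    have h0 : qFactP 0 = 1 := by simp [qFactP]
    rw [h0, Polynomial.map_one, Nat.zero_div]
    exact rootMultiplicity_eq_zero (by simp [IsRoot])
  | succ n ih =>
    have hstep : (qFactP (n + 1)).map (Int.castRingHom k)
        = (qFactP n).map (Int.castRingHom k) * (qIntP (n + 1)).map (Int.castRingHom k) := by
      rw [qFactP, Finset.prod_range_succ, Polynomial.map_mul]
      rfl
    rw [hstep, rootMultiplicity_mul (by
        apply mul_ne_zero (qFactP_map_ne_zero n)
        rw [qIntP_map]; exact geomP_ne_zero _ (Nat.succ_pos n)),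
      ih, mult_qIntP q hq1 hq (n + 1) (Nat.succ_pos n), Nat.succ_div]

lemma main_aux {k : Type*} [Field k] [CharZero k] (q : k) (hq1 : q ≠ 1)
    (hq : orderOf q ≠ 0) (n m : ℕ) (hmn : m ≤ n) (B : Polynomial ℤ)
    (hB : qFactP n = B * (qFactP m * qFactP (n - m))) :
    Polynomial.aeval q B = 0 ↔ n % orderOf q < m % orderOf q := by
  set N := orderOf q with hN
  have hN0 : 0 < N := Nat.pos_of_ne_zero hq
  have hBmap : (qFactP n).map (Int.castRingHom k)
      = B.map (Int.castRingHom k) *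
        ((qFactP m).map (Int.castRingHom k) * (qFactP (n - m)).map (Int.castRingHom k)) := by
    rw [hB]; simp [Polynomial.map_mul]
  have hBne : B.map (Int.castRingHom k) ≠ 0 := by
    intro h
    rw [h, zero_mul] at hBmap
    exact qFactP_map_ne_zero n hBmap
  have hprodne : (qFactP m).map (Int.castRingHom k)
      * (qFactP (n - m)).map (Int.castRingHom k) ≠ 0 :=
    mul_ne_zero (qFactP_map_ne_zero m) (qFactP_map_ne_zero (n - m))
  have hmult : n / N
      = (B.map (Int.castRingHom k)).rootMultiplicity q + (m / N + (n - m) / N) := by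
    have := congr_arg (rootMultiplicity q) hBmap
    rwa [rootMultiplicity_mul (mul_ne_zero hBne hprodne), rootMultiplicity_mul hprodne,
      mult_qFactP q hq1 hq, mult_qFactP q hq1 hq, mult_qFactP q hq1 hq] at this
  have hadd : n / N = m / N + (n - m) / N + if N ≤ m % N + (n - m) % N then 1 else 0 := by
    conv_lhs => rw [← Nat.add_sub_cancel' hmn]
    rw [Nat.add_div hN0]
  have hmod : n % N = (m % N + (n - m) % N) % N := by
    conv_lhs => rw [← Nat.add_sub_cancel' hmn]
    rw [Nat.add_mod]
  have hcond : (N ≤ m % N + (n - m) % N) ↔ n % N < m % N := by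
    have hm1 : m % N < N := Nat.mod_lt _ hN0
    have hm2 : (n - m) % N < N := Nat.mod_lt _ hN0
    constructor
    · intro h
      rw [hmod, Nat.mod_eq_sub_mod h, Nat.mod_eq_of_lt (by omega)]
      omega
    · intro h
      by_contra hc
      rw [hmod, Nat.mod_eq_of_lt (by omega)] at h
      omega
  have haev : Polynomial.aeval q B = Polynomial.eval q (B.map (Int.castRingHom k)) := by
    rw [Polynomial.aeval_def, Polynomial.eval₂_eq_eval_map]
    congr 1
  rw [haev]
  have hiff : Polynomial.eval q (B.map (Int.castRingHom k)) = 0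
      ↔ 0 < (B.map (Int.castRingHom k)).rootMultiplicity q :=
    ((rootMultiplicity_pos hBne).trans Iff.rfl).symm
  rw [hiff, ← hcond]
  by_cases h : N ≤ m % N + (n - m) % N <;> simp only [h, if_true, if_false] at hadd <;> omega

/-- Let `q ≠ 1` be a root of unity of finite order `N = orderOf q` in a field of
characteristic 0, and `m ≤ n`. The Gaussian binomial `binom(n,m)_q`, defined by evaluating at
`q` the polynomial `B` with `[n]_Q! = B·[m]_Q!·[n−m]_Q!`, vanishes iff writing
`n = aN + b`, `m = cN + d` (`0 ≤ b, d < N`) one has `d > b`; in particular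
`binom(N, m')_q = 0` for `0 < m' < N`. -/
theorem stmt13 {k : Type*} [Field k] [CharZero k] (q : k) (hq1 : q ≠ 1)
    (hq : orderOf q ≠ 0) (n m : ℕ) (hmn : m ≤ n) (B : Polynomial ℤ)
    (hB : qFactP n = B * (qFactP m * qFactP (n - m))) :
    (Polynomial.aeval q B = 0 ↔ n % orderOf q < m % orderOf q) ∧
    (∀ m', 0 < m' → m' < orderOf q → ∀ B' : Polynomial ℤ,
      qFactP (orderOf q) = B' * (qFactP m' * qFactP (orderOf q - m')) →
      Polynomial.aeval q B' = 0) := by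
  refine ⟨main_aux q hq1 hq n m hmn B hB, ?_⟩
  intro m' hm'0 hm'N B' hB'
  rw [main_aux q hq1 hq (orderOf q) m' hm'N.le B' hB']
  rw [Nat.mod_self, Nat.mod_eq_of_lt hm'N]
  exact hm'0
end

section
/- Let Γ be a group and let g_1, g_2 ∈ Γ be elements that do not commute, such that the conjugacy class of each g_i has exactly 2 elements. Set g'_1 = g_2 g_1 g_2⁻¹, g'_2 = g_1 g_2 g_1⁻¹, and t = g'_1 g_1⁻¹. Then g'_2 = g_2 t and t² = 1. -/
/-- If the conjugacy class of `h` has exactly 2 elements and `g h g⁻¹ ≠ h`,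
then the class is exactly `{h, g h g⁻¹}`. -/
lemma classPair {Γ : Type*} [Group Γ] (g h : Γ) (hne : g * h * g⁻¹ ≠ h)
    (hc : Nat.card {x : Γ | IsConj h x} = 2) :
    {x : Γ | IsConj h x} = {h, g * h * g⁻¹} := by
  rw [Nat.card_coe_set_eq, Set.ncard_eq_two] at hc
  obtain ⟨a, b, hab, hS⟩ := hc
  have hh : h ∈ {x : Γ | IsConj h x} := IsConj.refl h
  have hh' : g * h * g⁻¹ ∈ {x : Γ | IsConj h x} := isConj_iff.2 ⟨g, rfl⟩
  rw [hS] at hh hh' ⊢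
  rcases hh with rfl | rfl <;> rcases hh' with h2 | h2
  · exact absurd h2 hne
  · rw [h2]
  · rw [h2, Set.pair_comm]
  · exact absurd h2.symm (Ne.symm hne)

/-- Let `g₁, g₂` be non-commuting elements of a group `Γ` whose conjugacy classes
each have exactly 2 elements. With `g'₁ = g₂ g₁ g₂⁻¹`, `g'₂ = g₁ g₂ g₁⁻¹` and `t = g'₁ g₁⁻¹`,
one has `g'₂ = g₂ t` and `t² = 1`. -/
theorem stmt14 {Γ : Type*} [Group Γ] (g₁ g₂ : Γ) (hnc : g₁ * g₂ ≠ g₂ * g₁)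
    (h1 : Nat.card {x : Γ | IsConj g₁ x} = 2)
    (h2 : Nat.card {x : Γ | IsConj g₂ x} = 2) :
    g₁ * g₂ * g₁⁻¹ = g₂ * (g₂ * g₁ * g₂⁻¹ * g₁⁻¹) ∧
    (g₂ * g₁ * g₂⁻¹ * g₁⁻¹) ^ 2 = 1 := by
  have hne1 : g₂ * g₁ * g₂⁻¹ ≠ g₁ := by
    intro h; apply hnc
    have := congrArg (· * g₂) h
    simpa [mul_assoc] using this.symm
  have hne2 : g₁ * g₂ * g₁⁻¹ ≠ g₂ := by
    intro h; apply hnc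
    have := congrArg (· * g₁) h
    simpa [mul_assoc] using this
  have hC1 := classPair g₂ g₁ hne1 h1
  have hC2 := classPair g₁ g₂ hne2 h2
  -- conjugation by g₂ swaps the class of g₁: g₂ (g₂ g₁ g₂⁻¹) g₂⁻¹ = g₁
  have e1 : g₂ * (g₂ * g₁ * g₂⁻¹) * g₂⁻¹ = g₁ := by
    have hmem : g₂ * (g₂ * g₁ * g₂⁻¹) * g₂⁻¹ ∈ {x : Γ | IsConj g₁ x} := by
      exact isConj_iff.2 ⟨g₂ * g₂, by group⟩
    rw [hC1] at hmem
    rcases hmem with h | h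
    · exact h
    · exfalso; apply hne1
      have := congrArg (fun x => g₂⁻¹ * x * g₂) h
      simpa [mul_assoc] using this
  -- conjugation by g₁ fixes g₂ g₁ g₂⁻¹ (since it fixes g₁)
  have e2 : g₁ * (g₂ * g₁ * g₂⁻¹) * g₁⁻¹ = g₂ * g₁ * g₂⁻¹ := by
    have hmem : g₁ * (g₂ * g₁ * g₂⁻¹) * g₁⁻¹ ∈ {x : Γ | IsConj g₁ x} := by
      exact isConj_iff.2 ⟨g₁ * g₂, by group⟩
    rw [hC1] at hmem
    rcases hmem with h | h
    · exfalso; apply hne1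
      have := congrArg (fun x => g₁⁻¹ * x * g₁) h
      have h' : g₂ * g₁ * g₂⁻¹ = g₁⁻¹ * g₁ * g₁ := by simpa [mul_assoc] using this
      simpa [mul_assoc] using h'
    · exact h
  -- conjugation by g₁ swaps the class of g₂: g₁ (g₁ g₂ g₁⁻¹) g₁⁻¹ = g₂
  have e3 : g₁ * (g₁ * g₂ * g₁⁻¹) * g₁⁻¹ = g₂ := by
    have hmem : g₁ * (g₁ * g₂ * g₁⁻¹) * g₁⁻¹ ∈ {x : Γ | IsConj g₂ x} := by
      exact isConj_iff.2 ⟨g₁ * g₁, by group⟩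
    rw [hC2] at hmem
    rcases hmem with h | h
    · exact h
    · exfalso; apply hne2
      have := congrArg (fun x => g₁⁻¹ * x * g₁) h
      simpa [mul_assoc] using this
  -- e1 rearranged: g₂ g₂ g₁ = g₁ g₂ g₂
  have e1' : g₂ * g₂ * g₁ = g₁ * (g₂ * g₂) := by
    have := congrArg (fun x => x * g₂ * g₂) e1
    simpa [mul_assoc] using this
  -- e3 rearranged: g₁ g₁ g₂ = g₂ g₁ g₁
  have e3' : g₁ * g₁ * g₂ = g₂ * (g₁ * g₁) := by
    have := congrArg (fun x => x * g₁ * g₁) e3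
    simpa [mul_assoc] using this
  constructor
  · calc g₁ * g₂ * g₁⁻¹ = g₁ * (g₂ * g₂) * g₂⁻¹ * g₁⁻¹ := by group
      _ = g₂ * g₂ * g₁ * g₂⁻¹ * g₁⁻¹ := by rw [← e1']
      _ = g₂ * (g₂ * g₁ * g₂⁻¹ * g₁⁻¹) := by group
  · have key : g₂ * g₁ * g₂⁻¹ * (g₂ * g₁ * g₂⁻¹) = g₁ * g₁ := by
      calc g₂ * g₁ * g₂⁻¹ * (g₂ * g₁ * g₂⁻¹) = g₂ * (g₁ * g₁) * g₂⁻¹ := by group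
        _ = g₁ * g₁ * g₂ * g₂⁻¹ := by rw [e3']
        _ = g₁ * g₁ := by group
    -- use e2 (g₁ commutes with g₂g₁g₂⁻¹) and key
    have e2' : g₁⁻¹ * (g₂ * g₁ * g₂⁻¹) = g₂ * g₁ * g₂⁻¹ * g₁⁻¹ := by
      have := congrArg (fun x => g₁⁻¹ * x) e2
      simpa [mul_assoc] using this.symm
    calc (g₂ * g₁ * g₂⁻¹ * g₁⁻¹) ^ 2
        = g₂ * g₁ * g₂⁻¹ * (g₁⁻¹ * (g₂ * g₁ * g₂⁻¹)) * g₁⁻¹ := by rw [pow_two]; group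
      _ = g₂ * g₁ * g₂⁻¹ * (g₂ * g₁ * g₂⁻¹ * g₁⁻¹) * g₁⁻¹ := by rw [e2']
      _ = g₂ * g₁ * g₂⁻¹ * (g₂ * g₁ * g₂⁻¹) * (g₁⁻¹ * g₁⁻¹) := by group
      _ = g₁ * g₁ * (g₁⁻¹ * g₁⁻¹) := by rw [key]
      _ = 1 := by group
end

section
/- Let q ∈ k^× with q ≠ −1 and let V = V_{3,q} be the braided vector space with basis x_0, x_1, x_2 (indices in Z/3) and braiding c(x_i ⊗ x_j) = q x_{−i−j} ⊗ x_i. If q is a primitive 6th root of unity, then the kernel of the quantum symmetrizer S² = id + c on V ⊗ V is 2-dimensional, spanned by x_0x_1 − q x_2x_0 + q² x_1x_2 and x_1x_0 − q x_2x_1 + q² x_0x_2 (writing x_i x_j for x_i ⊗ x_j). If q is a root of unity with N(q) ∉ {2, 6}, then ker(id + c) = 0. -/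
/-!
In the basis `x_i ⊗ x_j` the braiding is `q` times the permutation `σ(i, j) = (-i - j, i)` of
`ℤ/3 × ℤ/3`, and `σ³ = 1`. A vector killed by `id + c` has coordinates with
`a (σ p) = -q a p`, so `(1 - (-q)^n) a p = 0` whenever `σⁿ p = p`. The three fixed points
`(i, i)` therefore carry no kernel since `q ≠ -1`, and everything hinges on the two 3-cycles
through `(0, 1)` and `(1, 0)`: if `q³ ≠ -1` the kernel is zero, while if `q³ = -1` each 3-cycle
contributes exactly the line spanned by its orbit sum `∑ (-q)^m x_{σ^m p}`. Finally `q³ = -1`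
holds exactly for `N(q) ∈ {2, 6}` in characteristic `≠ 2`.
-/

open TensorProduct Module

section PermutedBasis

variable {ι R M : Type*} [CommRing R] [AddCommGroup M] [Module R M]

theorem Equiv.Perm.apply_pow_apply_of_apply_eq_mul {σ : Equiv.Perm ι} {f : ι → R} {r : R}
    (hf : ∀ i, f (σ i) = r * f i) (n : ℕ) (i : ι) : f ((σ ^ n) i) = r ^ n * f i := by
  induction n with
  | zero => simp
  | succ n ih => rw [pow_succ', Equiv.Perm.mul_apply, hf, ih, pow_succ']; ring

theorem Equiv.Perm.eq_zero_of_pow_apply_eq_self [IsDomain R] {σ : Equiv.Perm ι} {f : ι → R}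
    {r : R} (hf : ∀ i, f (σ i) = r * f i) {n : ℕ} {i : ι} (hi : (σ ^ n) i = i) (hr : r ^ n ≠ 1) :
    f i = 0 := by
  have h := Equiv.Perm.apply_pow_apply_of_apply_eq_mul hf n i
  rw [hi] at h
  exact (mul_eq_zero.mp (by linear_combination -h : (r ^ n - 1) * f i = 0)).resolve_left
    (sub_ne_zero.mpr hr)

variable {σ : Equiv.Perm ι} {q : R} {c : M →ₗ[R] M}

theorem Module.Basis.repr_map_apply_perm (b : Basis ι R M) (hc : ∀ i, c (b i) = q • b (σ i))
    (v : M) (i : ι) : b.repr (c v) (σ i) = q * b.repr v i := by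
  have : (Finsupp.lapply (σ i)) ∘ₗ b.repr.toLinearMap ∘ₗ c
      = q • (Finsupp.lapply i) ∘ₗ b.repr.toLinearMap := by
    refine b.ext fun j => ?_
    simp only [LinearMap.comp_apply, hc, map_smul, Basis.repr_self, LinearMap.smul_apply,
      LinearEquiv.coe_coe, Finsupp.lapply_apply, Finsupp.single_apply_left σ.injective]
  exact LinearMap.congr_fun this v

theorem Module.Basis.mem_ker_id_add_iff (b : Basis ι R M) (hc : ∀ i, c (b i) = q • b (σ i))
    (v : M) : v ∈ LinearMap.ker (LinearMap.id + c) ↔ ∀ i, b.repr v (σ i) = -q * b.repr v i := by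
  rw [LinearMap.mem_ker, LinearMap.add_apply, LinearMap.id_apply, ← b.forall_coord_eq_zero_iff,
    σ.surjective.forall]
  refine forall_congr' fun i => ?_
  rw [map_add, Basis.coord_apply, Basis.coord_apply, b.repr_map_apply_perm hc]
  constructor <;> intro h <;> linear_combination h

theorem orbitSum_mem_ker_id_add (x : ι → M) (hc : ∀ i, c (x i) = q • x (σ i)) {n : ℕ} {p : ι}
    (hp : (σ ^ n) p = p) (hq : (-q) ^ n = 1) :
    ∑ m ∈ Finset.range n, (-q) ^ m • x ((σ ^ m) p) ∈ LinearMap.ker (LinearMap.id + c) := by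
  set y : ℕ → M := fun m => (-q) ^ m • x ((σ ^ m) p)
  have hstep : ∀ m, c (y m) = -y (m + 1) := fun m => by
    simp only [y, map_smul, hc, smul_smul, pow_succ' σ, Equiv.Perm.mul_apply, ← neg_smul]
    congr 1; ring
  have hcycle : ∑ m ∈ Finset.range n, y (m + 1) = ∑ m ∈ Finset.range n, y m := by
    have h := (Finset.sum_range_succ' y n).symm.trans (Finset.sum_range_succ y n)
    rwa [show y n = y 0 by simp [y, hp, hq], add_left_inj] at h
  rw [LinearMap.mem_ker, LinearMap.add_apply, LinearMap.id_apply, map_sum]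
  change ∑ m ∈ Finset.range n, y m + ∑ m ∈ Finset.range n, c (y m) = 0
  simp only [hstep, Finset.sum_neg_distrib, hcycle, add_neg_cancel]

end PermutedBasis

theorem pow_three_eq_neg_one_iff_orderOf {K : Type*} [CommRing K] [IsDomain K] [NeZero (2 : K)]
    {q : K} : q ^ 3 = -1 ↔ orderOf q = 2 ∨ orderOf q = 6 := by
  constructor
  · intro h3
    have h6 : orderOf q ∣ 6 := orderOf_dvd_of_pow_eq_one (by linear_combination (q ^ 3 - 1) * h3)
    have hn3 : ¬ orderOf q ∣ 3 := fun hd => NeZero.ne (2 : K) <| by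
      linear_combination h3 - orderOf_dvd_iff_pow_eq_one.mp hd
    have hle := Nat.le_of_dvd (by norm_num) h6
    interval_cases orderOf q <;> omega
  · rintro (h | h)
    · have hq : IsPrimitiveRoot q 2 := h ▸ IsPrimitiveRoot.orderOf q
      rw [hq.eq_neg_one_of_two_right]; norm_num
    · have hq : IsPrimitiveRoot q 6 := h ▸ IsPrimitiveRoot.orderOf q
      exact (hq.pow_of_dvd (by norm_num) (by norm_num)).eq_neg_one_of_two_right

def braidPerm : Equiv.Perm (ZMod 3 × ZMod 3) where
  toFun p := (-p.1 - p.2, p.1)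
  invFun p := (p.2, -p.1 - p.2)
  left_inv p := Prod.ext rfl (by dsimp; ring)
  right_inv p := Prod.ext (by dsimp; ring) rfl

theorem braidPerm_pow_three : braidPerm ^ 3 = 1 := by decide

theorem braidPerm_orbits (p : ZMod 3 × ZMod 3) : braidPerm p = p ∨
    ∃ m : Fin 3, (braidPerm ^ (m : ℕ)) (0, 1) = p ∨ (braidPerm ^ (m : ℕ)) (1, 0) = p := by
  revert p; decide

section BraidedV3

variable (k : Type*) [Field k]

noncomputable def tensorBasis : Basis (ZMod 3 × ZMod 3) k ((ZMod 3 → k) ⊗[k] (ZMod 3 → k)) :=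
  (Pi.basisFun k (ZMod 3)).tensorProduct (Pi.basisFun k (ZMod 3))

theorem tensorBasis_apply (i j : ZMod 3) :
    tensorBasis k (i, j) = (Pi.single i 1 : ZMod 3 → k) ⊗ₜ[k] (Pi.single j 1 : ZMod 3 → k) := by
  simp [tensorBasis]

noncomputable def orbitVector (q : k) (p : ZMod 3 × ZMod 3) : (ZMod 3 → k) ⊗[k] (ZMod 3 → k) :=
  ∑ m ∈ Finset.range 3, (-q) ^ m • tensorBasis k ((braidPerm ^ m) p)

variable {k}

theorem orbitVector_eq (q : k) (i j : ZMod 3) :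
    orbitVector k q (i, j) = tensorBasis k (i, j) - q • tensorBasis k (-i - j, i)
      + q ^ 2 • tensorBasis k (j, -i - j) := by
  have h1 : (braidPerm ^ 1) (i, j) = (-i - j, i) := rfl
  have h2 : (braidPerm ^ 2) (i, j) = (j, -i - j) := Prod.ext (show -(-i - j) - i = j by ring) rfl
  simp only [orbitVector, Finset.sum_range_succ, Finset.sum_range_zero, pow_zero,
    Equiv.Perm.one_apply, h1, h2]
  module

theorem orbitVector_zero_one (q : k) :
    orbitVector k q (0, 1) = (Pi.single 0 1 : ZMod 3 → k) ⊗ₜ[k] (Pi.single 1 1 : ZMod 3 → k)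
      - q • ((Pi.single 2 1 : ZMod 3 → k) ⊗ₜ[k] (Pi.single 0 1 : ZMod 3 → k))
      + q ^ 2 • ((Pi.single 1 1 : ZMod 3 → k) ⊗ₜ[k] (Pi.single 2 1 : ZMod 3 → k)) := by
  simp only [orbitVector_eq, tensorBasis_apply]; rfl

theorem orbitVector_one_zero (q : k) :
    orbitVector k q (1, 0) = (Pi.single 1 1 : ZMod 3 → k) ⊗ₜ[k] (Pi.single 0 1 : ZMod 3 → k)
      - q • ((Pi.single 2 1 : ZMod 3 → k) ⊗ₜ[k] (Pi.single 1 1 : ZMod 3 → k))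
      + q ^ 2 • ((Pi.single 0 1 : ZMod 3 → k) ⊗ₜ[k] (Pi.single 2 1 : ZMod 3 → k)) := by
  simp only [orbitVector_eq, tensorBasis_apply]; rfl

theorem repr_orbitVector (q : k) :
    (tensorBasis k).repr (orbitVector k q (0, 1)) (0, 1) = 1 ∧
    (tensorBasis k).repr (orbitVector k q (0, 1)) (1, 0) = 0 ∧
    (tensorBasis k).repr (orbitVector k q (1, 0)) (0, 1) = 0 ∧
    (tensorBasis k).repr (orbitVector k q (1, 0)) (1, 0) = 1 := by
  simp +decide [orbitVector_eq]

theorem linearIndependent_orbitVector (q : k) :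
    LinearIndependent k ![orbitVector k q (0, 1), orbitVector k q (1, 0)] := by
  obtain ⟨h₁₁, h₁₂, h₂₁, h₂₂⟩ := repr_orbitVector q
  refine LinearIndependent.pair_iff.mpr fun s t hst => ⟨?_, ?_⟩
  · simpa [h₁₁, h₂₁] using congrArg (fun v => (tensorBasis k).repr v (0, 1)) hst
  · simpa [h₁₂, h₂₂] using congrArg (fun v => (tensorBasis k).repr v (1, 0)) hst

theorem finrank_span_orbitVector (q : k) :
    finrank k (Submodule.span k {orbitVector k q (0, 1), orbitVector k q (1, 0)}) = 2 := by
  rw [← Matrix.range_cons_cons_empty, finrank_span_eq_card (linearIndependent_orbitVector q),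
    Fintype.card_fin]

variable {q : k} {c : (ZMod 3 → k) ⊗[k] (ZMod 3 → k) →ₗ[k] (ZMod 3 → k) ⊗[k] (ZMod 3 → k)}

theorem map_tensorBasis (hc : ∀ i j : ZMod 3,
      c ((Pi.single i 1 : ZMod 3 → k) ⊗ₜ[k] (Pi.single j 1 : ZMod 3 → k))
        = q • ((Pi.single (-i - j) 1 : ZMod 3 → k) ⊗ₜ[k] (Pi.single i 1 : ZMod 3 → k)))
    (p : ZMod 3 × ZMod 3) : c (tensorBasis k p) = q • tensorBasis k (braidPerm p) := by
  obtain ⟨i, j⟩ := p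
  simpa [tensorBasis_apply, braidPerm] using hc i j

theorem ker_id_add_eq_bot_of_pow_three_ne
    (hc : ∀ p, c (tensorBasis k p) = q • tensorBasis k (braidPerm p)) (hq : q ^ 3 ≠ -1) :
    LinearMap.ker (LinearMap.id + c) = ⊥ := by
  refine (Submodule.eq_bot_iff _).mpr fun v hv => ?_
  rw [(tensorBasis k).mem_ker_id_add_iff hc] at hv
  refine (tensorBasis k).forall_coord_eq_zero_iff.mp fun p =>
    Equiv.Perm.eq_zero_of_pow_apply_eq_self hv (n := 3) (by rw [braidPerm_pow_three]; rfl) ?_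
  contrapose! hq
  linear_combination -hq

theorem eq_zero_of_mem_ker_id_add
    (hc : ∀ p, c (tensorBasis k p) = q • tensorBasis k (braidPerm p)) (hq : q ≠ -1)
    {v : (ZMod 3 → k) ⊗[k] (ZMod 3 → k)}
    (hv : v ∈ LinearMap.ker (LinearMap.id + c)) (h₁ : (tensorBasis k).repr v (0, 1) = 0)
    (h₂ : (tensorBasis k).repr v (1, 0) = 0) : v = 0 := by
  rw [(tensorBasis k).mem_ker_id_add_iff hc] at hv
  refine (tensorBasis k).forall_coord_eq_zero_iff.mp fun p => ?_
  rcases braidPerm_orbits p with hp | ⟨m, rfl | rfl⟩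
  · exact Equiv.Perm.eq_zero_of_pow_apply_eq_self hv (n := 1) (by rwa [pow_one])
      (by rwa [pow_one, ne_eq, neg_eq_iff_eq_neg])
  · rw [Basis.coord_apply, Equiv.Perm.apply_pow_apply_of_apply_eq_mul hv, h₁, mul_zero]
  · rw [Basis.coord_apply, Equiv.Perm.apply_pow_apply_of_apply_eq_mul hv, h₂, mul_zero]

theorem orbitVector_mem_ker_id_add
    (hc : ∀ p, c (tensorBasis k p) = q • tensorBasis k (braidPerm p))
    (hq : q ^ 3 = -1) (p : ZMod 3 × ZMod 3) :
    orbitVector k q p ∈ LinearMap.ker (LinearMap.id + c) :=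
  orbitSum_mem_ker_id_add _ hc (by rw [braidPerm_pow_three]; rfl) (by linear_combination -hq)

theorem ker_id_add_eq_span_orbitVector
    (hc : ∀ p, c (tensorBasis k p) = q • tensorBasis k (braidPerm p))
    (hq₁ : q ≠ -1) (hq₃ : q ^ 3 = -1) :
    LinearMap.ker (LinearMap.id + c)
      = Submodule.span k {orbitVector k q (0, 1), orbitVector k q (1, 0)} := by
  refine le_antisymm (fun v hv => ?_) (Submodule.span_le.mpr ?_)
  · obtain ⟨h₁₁, h₁₂, h₂₁, h₂₂⟩ := repr_orbitVector q
    set a := (tensorBasis k).repr v (0, 1)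
    set b := (tensorBasis k).repr v (1, 0)
    have hw : a • orbitVector k q (0, 1) + b • orbitVector k q (1, 0)
        ∈ LinearMap.ker (LinearMap.id + c) :=
      add_mem (Submodule.smul_mem _ _ (orbitVector_mem_ker_id_add hc hq₃ _))
        (Submodule.smul_mem _ _ (orbitVector_mem_ker_id_add hc hq₃ _))
    have h := eq_zero_of_mem_ker_id_add hc hq₁ (sub_mem hv hw)
      (by simp [a, h₁₁, h₂₁]) (by simp [b, h₁₂, h₂₂])
    exact Submodule.mem_span_pair.mpr ⟨a, b, (sub_eq_zero.mp h).symm⟩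
  · rintro _ (rfl | rfl) <;> exact orbitVector_mem_ker_id_add hc hq₃ _

end BraidedV3

theorem stmt19_general {k : Type*} [Field k] [CharZero k] (q : k)
    (hqm1 : q ≠ -1)
    (c : ((ZMod 3 → k) ⊗[k] (ZMod 3 → k)) →ₗ[k] ((ZMod 3 → k) ⊗[k] (ZMod 3 → k)))
    (hc : ∀ i j : ZMod 3,
      c ((Pi.single i 1 : ZMod 3 → k) ⊗ₜ[k] (Pi.single j 1 : ZMod 3 → k))
        = q • ((Pi.single (-i - j) 1 : ZMod 3 → k) ⊗ₜ[k] (Pi.single i 1 : ZMod 3 → k))) :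
    (orderOf q = 6 →
      LinearMap.ker (LinearMap.id + c)
        = Submodule.span k
            {((Pi.single 0 1 : ZMod 3 → k) ⊗ₜ[k] (Pi.single 1 1 : ZMod 3 → k)
                - q • ((Pi.single 2 1 : ZMod 3 → k) ⊗ₜ[k] (Pi.single 0 1 : ZMod 3 → k))
                + q ^ 2 • ((Pi.single 1 1 : ZMod 3 → k) ⊗ₜ[k] (Pi.single 2 1 : ZMod 3 → k))),
             ((Pi.single 1 1 : ZMod 3 → k) ⊗ₜ[k] (Pi.single 0 1 : ZMod 3 → k)
                - q • ((Pi.single 2 1 : ZMod 3 → k) ⊗ₜ[k] (Pi.single 1 1 : ZMod 3 → k))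
                + q ^ 2 • ((Pi.single 0 1 : ZMod 3 → k) ⊗ₜ[k] (Pi.single 2 1 : ZMod 3 → k)))} ∧
      Module.finrank k (LinearMap.ker (LinearMap.id + c)) = 2) ∧
    (orderOf q ≠ 0 → orderOf q ≠ 2 → orderOf q ≠ 6 →
      LinearMap.ker (LinearMap.id + c) = ⊥) := by
  have hcσ := map_tensorBasis hc
  constructor
  · intro h6
    rw [ker_id_add_eq_span_orbitVector hcσ hqm1 (pow_three_eq_neg_one_iff_orderOf.mpr (.inr h6)),
      ← orbitVector_zero_one, ← orbitVector_one_zero]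
    exact ⟨rfl, finrank_span_orbitVector q⟩
  · intro _ h2 h6
    exact ker_id_add_eq_bot_of_pow_three_ne hcσ fun h3 =>
      (pow_three_eq_neg_one_iff_orderOf.mp h3).elim h2 h6

/-- Let `q ∈ kˣ`, `q ≠ −1`, and `V = V_{3,q}` with basis `x_0, x_1, x_2` indexed by
`ℤ/3` (here `x_i = Pi.single i 1` in `V = ZMod 3 → k`) and braiding
`c(x_i ⊗ x_j) = q x_{−i−j} ⊗ x_i`. If `q` is a primitive 6th root of unity, then
`ker(id + c)` is 2-dimensional, spanned by `x_0x_1 − q x_2x_0 + q² x_1x_2` and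
`x_1x_0 − q x_2x_1 + q² x_0x_2`. If `q` is a root of unity of order `∉ {2, 6}`, then
`ker(id + c) = 0`. -/
theorem stmt19 {k : Type*} [Field k] [IsAlgClosed k] [CharZero k] (q : k)
    (hq0 : q ≠ 0) (hqm1 : q ≠ -1)
    (c : ((ZMod 3 → k) ⊗[k] (ZMod 3 → k)) →ₗ[k] ((ZMod 3 → k) ⊗[k] (ZMod 3 → k)))
    (hc : ∀ i j : ZMod 3,
      c ((Pi.single i 1 : ZMod 3 → k) ⊗ₜ[k] (Pi.single j 1 : ZMod 3 → k))
        = q • ((Pi.single (-i - j) 1 : ZMod 3 → k) ⊗ₜ[k] (Pi.single i 1 : ZMod 3 → k))) :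
    (orderOf q = 6 →
      LinearMap.ker (LinearMap.id + c)
        = Submodule.span k
            {((Pi.single 0 1 : ZMod 3 → k) ⊗ₜ[k] (Pi.single 1 1 : ZMod 3 → k)
                - q • ((Pi.single 2 1 : ZMod 3 → k) ⊗ₜ[k] (Pi.single 0 1 : ZMod 3 → k))
                + q ^ 2 • ((Pi.single 1 1 : ZMod 3 → k) ⊗ₜ[k] (Pi.single 2 1 : ZMod 3 → k))),
             ((Pi.single 1 1 : ZMod 3 → k) ⊗ₜ[k] (Pi.single 0 1 : ZMod 3 → k)
                - q • ((Pi.single 2 1 : ZMod 3 → k) ⊗ₜ[k] (Pi.single 1 1 : ZMod 3 → k))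
                + q ^ 2 • ((Pi.single 0 1 : ZMod 3 → k) ⊗ₜ[k] (Pi.single 2 1 : ZMod 3 → k)))} ∧
      Module.finrank k (LinearMap.ker (LinearMap.id + c)) = 2) ∧
    (orderOf q ≠ 0 → orderOf q ≠ 2 → orderOf q ≠ 6 →
      LinearMap.ker (LinearMap.id + c) = ⊥) :=
  stmt19_general q hqm1 c hc
end
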